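/- With the notation of the previous context, if v_r attains the maximum of v ↦ p·v + (1/2) v·Av over the sphere |v| = r, and w_r := r p/|p|, then |w_r − v_r| ≤ 2 r² ‖A‖ |p|⁻¹. -/

import Mathlib

open scoped RealInnerProductSpace

/-!
Put `w = r p / ‖p‖` and `u = w - v_r`. Since `w` and `v_r` lie on the same sphere,
`⟪w, u⟫ = ‖u‖² / 2`, so the linear part of the objective gains `‖p‖ ‖u‖² / (2r)` in passing
from `v_r` to `w`. Maximality of `v_r` says that this gain is paid for by the quadratic part,
whose variation between two points of the sphere is at most `2 r ‖A‖ ‖u‖`.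
-/

section

variable {E : Type*} [NormedAddCommGroup E] [InnerProductSpace ℝ E]

theorem real_inner_sub_eq_half_norm_sub_sq_of_norm_eq {x y : E} (h : ‖x‖ = ‖y‖) :
    ⟪x, x - y⟫ = 1 / 2 * ‖x - y‖ ^ 2 := by
  rw [norm_sub_sq_real, inner_sub_right, real_inner_self_eq_norm_sq, h]
  ring

theorem ContinuousLinearMap.inner_map_self_sub_inner_map_self_le (A : E →L[ℝ] E) (x y : E) :
    ⟪x, A x⟫ - ⟪y, A y⟫ ≤ ‖A‖ * (‖x‖ + ‖y‖) * ‖x - y‖ := by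
  have split : ⟪x, A x⟫ - ⟪y, A y⟫ = ⟪x - y, A x⟫ + ⟪y, A (x - y)⟫ := by
    rw [map_sub, inner_sub_left, inner_sub_right]
    ring
  have bound_left : ⟪x - y, A x⟫ ≤ ‖x - y‖ * (‖A‖ * ‖x‖) :=
    (real_inner_le_norm _ _).trans (by gcongr; exact A.le_opNorm x)
  have bound_right : ⟪y, A (x - y)⟫ ≤ ‖y‖ * (‖A‖ * ‖x - y‖) :=
    (real_inner_le_norm _ _).trans (by gcongr; exact A.le_opNorm (x - y))
  rw [split]
  linarith

theorem norm_div_norm_smul_self {p : E} (hp : p ≠ 0) {r : ℝ} (hr : 0 ≤ r) :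
    ‖(r / ‖p‖) • p‖ = r := by
  simpa [div_eq_mul_inv] using norm_smul_inv_norm' (𝕜 := ℝ) hr hp

end

theorem le_of_sq_le_mul_self {t c : ℝ} (hc : 0 ≤ c) (h : t ^ 2 ≤ c * t) : t ≤ c := by
  nlinarith

theorem sphere_quadratic_maximizer_close_to_gradient_direction_general {d : ℕ}
    (p : EuclideanSpace ℝ (Fin d)) (hp : p ≠ 0)
    (A : EuclideanSpace ℝ (Fin d) →L[ℝ] EuclideanSpace ℝ (Fin d))
    (r : ℝ) (vr : EuclideanSpace ℝ (Fin d))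
    (hvr : ‖vr‖ = r)
    (hmax : ∀ v : EuclideanSpace ℝ (Fin d), ‖v‖ = r →
      ⟪p, v⟫ + (1 / 2) * ⟪v, A v⟫ ≤ ⟪p, vr⟫ + (1 / 2) * ⟪vr, A vr⟫) :
    ‖(r / ‖p‖) • p - vr‖ ≤ 2 * r ^ 2 * ‖A‖ * ‖p‖⁻¹ := by
  have hr : 0 ≤ r := hvr ▸ norm_nonneg vr
  set w := (r / ‖p‖) • p
  have hw : ‖w‖ = r := norm_div_norm_smul_self hp hr
  have half_sq : r / ‖p‖ * ⟪p, w - vr⟫ = 1 / 2 * ‖w - vr‖ ^ 2 := by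
    rw [← real_inner_smul_left]
    exact real_inner_sub_eq_half_norm_sub_sq_of_norm_eq (hw.trans hvr.symm)
  have gain : ⟪p, w - vr⟫ ≤ 1 / 2 * (⟪vr, A vr⟫ - ⟪w, A w⟫) := by
    rw [inner_sub_right]
    linarith [hmax w hw]
  have variation : ⟪vr, A vr⟫ - ⟪w, A w⟫ ≤ ‖A‖ * (r + r) * ‖w - vr‖ := by
    simpa only [hvr, hw, norm_sub_rev vr w] using A.inner_map_self_sub_inner_map_self_le vr w
  have key : 1 / 2 * ‖w - vr‖ ^ 2 ≤ r / ‖p‖ * (r * ‖A‖ * ‖w - vr‖) := by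
    rw [← half_sq]
    gcongr
    linarith
  refine le_of_sq_le_mul_self (by positivity) ?_
  calc ‖w - vr‖ ^ 2 ≤ 2 * (r / ‖p‖ * (r * ‖A‖ * ‖w - vr‖)) := by linarith
    _ = 2 * r ^ 2 * ‖A‖ * ‖p‖⁻¹ * ‖w - vr‖ := by ring

/-- If `v_r` attains the maximum of `v ↦ p·v + (1/2) v·Av` over the sphere `|v| = r`,
and `w_r := r p/|p|`, then `|w_r − v_r| ≤ 2 r² ‖A‖ |p|⁻¹`. -/
theorem sphere_quadratic_maximizer_close_to_gradient_direction {d : ℕ}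
    (p : EuclideanSpace ℝ (Fin d)) (hp : p ≠ 0)
    (A : EuclideanSpace ℝ (Fin d) →L[ℝ] EuclideanSpace ℝ (Fin d))
    (r : ℝ) (hr : 0 < r) (vr : EuclideanSpace ℝ (Fin d))
    (hvr : ‖vr‖ = r)
    (hmax : ∀ v : EuclideanSpace ℝ (Fin d), ‖v‖ = r →
      ⟪p, v⟫ + (1 / 2) * ⟪v, A v⟫ ≤ ⟪p, vr⟫ + (1 / 2) * ⟪vr, A vr⟫) :
    ‖(r / ‖p‖) • p - vr‖ ≤ 2 * r ^ 2 * ‖A‖ * ‖p‖⁻¹ :=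
  sphere_quadratic_maximizer_close_to_gradient_direction_general p hp A r vr hvr hmax
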